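/- arXiv:0806.0524 — 3 statements merged into one kernel-verified Lean document; each statement's English description precedes it below -/
import Mathlib

section
/- For every integer n ≥ 2, the 3×3×n rod can be tiled by trominoes. -/
/-- Standard basis vectors of `ℤ³`. -/
def e3 : Fin 3 → ℤ × ℤ × ℤ
  | 0 => (1, 0, 0)
  | 1 => (0, 1, 0)
  | 2 => (0, 0, 1)

/-- A 3D L-tromino: a cell together with two cells adjacent to it along two
different coordinate axes (equivalently, a translate/axis-rotation of
`{(0,0,0),(1,0,0),(0,1,0)}`). -/
def IsTromino3 (s : Finset (ℤ × ℤ × ℤ)) : Prop :=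
  ∃ (c : ℤ × ℤ × ℤ) (i j : Fin 3) (ε₁ ε₂ : ℤ), i ≠ j ∧
    (ε₁ = 1 ∨ ε₁ = -1) ∧ (ε₂ = 1 ∨ ε₂ = -1) ∧
    s = {c, c + ε₁ • e3 i, c + ε₂ • e3 j}

/-- The axis-aligned box `[0,a) × [0,b) × [0,c)` in `ℤ³`. -/
noncomputable def box (a b c : ℕ) : Finset (ℤ × ℤ × ℤ) :=
  (Finset.Ico (0 : ℤ) a) ×ˢ (Finset.Ico (0 : ℤ) b) ×ˢ (Finset.Ico (0 : ℤ) c)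

/-- `T` is a tiling of the region `R` by 3D trominoes: the trominoes are
pairwise disjoint and their union is exactly `R`. -/
def IsTiling3 (R : Finset (ℤ × ℤ × ℤ)) (T : Finset (Finset (ℤ × ℤ × ℤ))) : Prop :=
  (∀ t ∈ T, IsTromino3 t) ∧
    (∀ t₁ ∈ T, ∀ t₂ ∈ T, t₁ ≠ t₂ → Disjoint t₁ t₂) ∧
    (∀ x, x ∈ R ↔ ∃ t ∈ T, x ∈ t)

/-!
Every `n ≥ 2` is a sum of `2`s and `3`s, so the rod is a stack of `3×3×2` and `3×3×3` blocks along
the third axis. Each block has an explicit tiling, by six and by nine trominoes, and tilings of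
disjoint regions combine, translates of trominoes being trominoes.
-/

open Pointwise

section Tiling

variable {R R' : Finset (ℤ × ℤ × ℤ)} {T T' : Finset (Finset (ℤ × ℤ × ℤ))}

/-- The centre cell and the signs range over finite sets, which makes tromino-ness decidable. -/
theorem isTromino3_iff_exists_mem {s : Finset (ℤ × ℤ × ℤ)} :
    IsTromino3 s ↔ ∃ c ∈ s, ∃ i j : Fin 3, ∃ ε₁ ∈ ({1, -1} : Finset ℤ),
      ∃ ε₂ ∈ ({1, -1} : Finset ℤ), i ≠ j ∧ s = {c, c + ε₁ • e3 i, c + ε₂ • e3 j} := by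
  simp only [Finset.mem_insert, Finset.mem_singleton]
  constructor
  · rintro ⟨c, i, j, ε₁, ε₂, hij, h₁, h₂, rfl⟩
    exact ⟨c, by simp, i, j, ε₁, h₁, ε₂, h₂, hij, rfl⟩
  · rintro ⟨c, -, i, j, ε₁, h₁, ε₂, h₂, hij, rfl⟩
    exact ⟨c, i, j, ε₁, ε₂, hij, h₁, h₂, rfl⟩

theorem isTiling3_iff_biUnion :
    IsTiling3 R T ↔ (∀ t ∈ T, IsTromino3 t) ∧
      (∀ t₁ ∈ T, ∀ t₂ ∈ T, t₁ ≠ t₂ → Disjoint t₁ t₂) ∧ R = T.biUnion id := by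
  simp only [IsTiling3, Finset.ext_iff, Finset.mem_biUnion, id]

theorem IsTiling3.subset (h : IsTiling3 R T) {t : Finset (ℤ × ℤ × ℤ)} (ht : t ∈ T) : t ⊆ R :=
  fun x hx => (h.2.2 x).2 ⟨t, ht, hx⟩

theorem IsTromino3.vadd {s : Finset (ℤ × ℤ × ℤ)} (h : IsTromino3 s) (v : ℤ × ℤ × ℤ) :
    IsTromino3 (v +ᵥ s) := by
  obtain ⟨c, i, j, ε₁, ε₂, hij, h₁, h₂, rfl⟩ := h
  refine ⟨v + c, i, j, ε₁, ε₂, hij, h₁, h₂, ?_⟩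
  simp only [Finset.vadd_finset_insert, Finset.vadd_finset_singleton, vadd_eq_add, add_assoc]

theorem IsTiling3.vadd (h : IsTiling3 R T) (v : ℤ × ℤ × ℤ) :
    IsTiling3 (v +ᵥ R) (T.image (v +ᵥ ·)) := by
  obtain ⟨htro, hdisj, hcover⟩ := h
  refine ⟨?_, ?_, fun x => ?_⟩
  · simp only [Finset.forall_mem_image]
    exact fun t ht => (htro t ht).vadd v
  · simp only [Finset.forall_mem_image]
    intro t₁ ht₁ t₂ ht₂ hne
    rw [← Finset.image_vadd, ← Finset.image_vadd, Finset.disjoint_image (AddAction.injective v)]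
    exact hdisj t₁ ht₁ t₂ ht₂ (fun h => hne (h ▸ rfl))
  · rw [← vadd_neg_vadd v x, Finset.vadd_mem_vadd_finset_iff, hcover, Finset.exists_mem_image]
    simp only [Finset.vadd_mem_vadd_finset_iff]

theorem IsTiling3.union (h : IsTiling3 R T) (h' : IsTiling3 R' T') (hR : Disjoint R R') :
    IsTiling3 (R ∪ R') (T ∪ T') := by
  have hcross : ∀ t ∈ T, ∀ t' ∈ T', Disjoint t t' := fun t ht t' ht' =>
    hR.mono (h.subset ht) (h'.subset ht')
  refine ⟨?_, ?_, fun x => ?_⟩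
  · simp only [Finset.mem_union]
    rintro t (ht | ht)
    exacts [h.1 t ht, h'.1 t ht]
  · simp only [Finset.mem_union]
    rintro t₁ (ht₁ | ht₁) t₂ (ht₂ | ht₂) hne
    exacts [h.2.1 t₁ ht₁ t₂ ht₂ hne, hcross t₁ ht₁ t₂ ht₂, (hcross t₂ ht₂ t₁ ht₁).symm,
      h'.2.1 t₁ ht₁ t₂ ht₂ hne]
  · simp only [Finset.mem_union, h.2.2 x, h'.2.2 x, or_and_right, exists_or]

end Tiling

section Box

variable (a b c d : ℕ)

theorem box_add_eq_union :
    box a b (c + d) = box a b c ∪ (((0, 0, c) : ℤ × ℤ × ℤ) +ᵥ box a b d) := by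
  ext ⟨x, y, z⟩
  simp only [Finset.mem_union, ← Finset.neg_vadd_mem_iff, box, Finset.mem_product,
    Finset.mem_Ico, vadd_eq_add, Prod.neg_mk, Prod.mk_add_mk]
  push_cast
  omega

theorem disjoint_box_vadd_box : Disjoint (box a b c) (((0, 0, c) : ℤ × ℤ × ℤ) +ᵥ box a b d) := by
  rw [Finset.disjoint_left]
  rintro ⟨x, y, z⟩ hxyz
  simp only [← Finset.neg_vadd_mem_iff, box, Finset.mem_product, Finset.mem_Ico, vadd_eq_add,
    Prod.neg_mk, Prod.mk_add_mk] at hxyz ⊢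
  omega

variable {a b c d}

theorem exists_isTiling3_box_add {T T' : Finset (Finset (ℤ × ℤ × ℤ))}
    (h : IsTiling3 (box a b c) T) (h' : IsTiling3 (box a b d) T') :
    ∃ T'', IsTiling3 (box a b (c + d)) T'' := by
  rw [box_add_eq_union]
  exact ⟨_, h.union (h'.vadd _) (disjoint_box_vadd_box a b c d)⟩

end Box

def rodTiling₂ : Finset (Finset (ℤ × ℤ × ℤ)) :=
  {{(0,0,0), (0,1,0), (1,0,0)},
   {(0,0,1), (0,1,1), (1,0,1)},
   {(0,2,0), (0,2,1), (1,2,0)},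
   {(1,1,0), (1,1,1), (2,1,0)},
   {(1,2,1), (2,2,0), (2,2,1)},
   {(2,0,0), (2,0,1), (2,1,1)}}

def rodTiling₃ : Finset (Finset (ℤ × ℤ × ℤ)) :=
  {{(0,0,0), (0,1,0), (1,0,0)},
   {(0,0,1), (0,0,2), (1,0,1)},
   {(0,1,1), (0,2,1), (1,1,1)},
   {(0,1,2), (0,2,2), (1,1,2)},
   {(0,2,0), (1,1,0), (1,2,0)},
   {(1,0,2), (2,0,2), (2,1,2)},
   {(1,2,1), (1,2,2), (2,2,2)},
   {(2,0,0), (2,0,1), (2,1,0)},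
   {(2,1,1), (2,2,0), (2,2,1)}}

theorem isTiling3_rodTiling₂ : IsTiling3 (box 3 3 2) rodTiling₂ :=
  isTiling3_iff_biUnion.2
    ⟨fun t ht => isTromino3_iff_exists_mem.2 (by revert t; decide), by decide, by decide⟩

theorem isTiling3_rodTiling₃ : IsTiling3 (box 3 3 3) rodTiling₃ :=
  isTiling3_iff_biUnion.2
    ⟨fun t ht => isTromino3_iff_exists_mem.2 (by revert t; decide), by decide, by decide⟩

/-- For every integer `n ≥ 2`, the `3×3×n` rod can be tiled by trominoes. -/
theorem tile_rod_3_3_n (n : ℕ) (hn : 2 ≤ n) :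
    ∃ T : Finset (Finset (ℤ × ℤ × ℤ)), IsTiling3 (box 3 3 n) T := by
  induction n using Nat.strong_induction_on with
  | _ n ih =>
    obtain rfl | rfl | h4 : n = 2 ∨ n = 3 ∨ 4 ≤ n := by omega
    · exact ⟨_, isTiling3_rodTiling₂⟩
    · exact ⟨_, isTiling3_rodTiling₃⟩
    · obtain ⟨m, rfl⟩ : ∃ m, n = m + 2 := ⟨n - 2, by omega⟩
      obtain ⟨T, hT⟩ := ih m (by omega) (by omega)
      exact exists_isTiling3_box_add hT isTiling3_rodTiling₂
end

section
/- For every positive integer n, the slab of dimensions 3×(3n+1)×(3n+1) can be tiled by trominoes. -/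
/-! A `3 × b × c` box splits into `3 × 2 × 1` and `3 × 1 × 2` boxes (two trominoes each) as soon
as `b` or `c` is even, and into `3 × 3 × 3` cubes (nine trominoes) when `3 ∣ b` and `3 ∣ c`.
For `n = m + 1` the square face `(3m + 4) × (3m + 4)` is a `4 × (3m + 4)` strip, a `3m × 4` strip
and a `3m × 3m` square, which are of these three kinds. -/

def Tileable3 (R : Finset (ℤ × ℤ × ℤ)) : Prop := ∃ T, IsTiling3 R T

lemma isTromino3_image_add (v : ℤ × ℤ × ℤ) {s : Finset (ℤ × ℤ × ℤ)} (h : IsTromino3 s) :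
    IsTromino3 (s.image (· + v)) := by
  obtain ⟨c, i, j, ε₁, ε₂, hij, h₁, h₂, rfl⟩ := h
  refine ⟨c + v, i, j, ε₁, ε₂, hij, h₁, h₂, ?_⟩
  simp only [Finset.image_insert, Finset.image_singleton, add_right_comm _ _ v]

namespace IsTiling3

variable {R R₁ R₂ : Finset (ℤ × ℤ × ℤ)} {T T₁ T₂ : Finset (Finset (ℤ × ℤ × ℤ))}

lemma subset_of_mem (h : IsTiling3 R T) {t : Finset (ℤ × ℤ × ℤ)} (ht : t ∈ T) : t ⊆ R :=
  fun x hx => (h.2.2 x).2 ⟨t, ht, hx⟩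

lemma union_s7 (h₁ : IsTiling3 R₁ T₁) (h₂ : IsTiling3 R₂ T₂) (hd : Disjoint R₁ R₂) :
    IsTiling3 (R₁ ∪ R₂) (T₁ ∪ T₂) := by
  refine ⟨?_, ?_, fun x => ?_⟩
  · simp only [Finset.forall_mem_union]
    exact ⟨h₁.1, h₂.1⟩
  · simp only [Finset.forall_mem_union]
    refine ⟨fun t₁ ht₁ => ⟨?_, ?_⟩, fun t₁ ht₁ => ⟨?_, ?_⟩⟩ <;> intro t₂ ht₂ hne
    · exact h₁.2.1 t₁ ht₁ t₂ ht₂ hne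
    · exact hd.mono (h₁.subset_of_mem ht₁) (h₂.subset_of_mem ht₂)
    · exact hd.symm.mono (h₂.subset_of_mem ht₁) (h₁.subset_of_mem ht₂)
    · exact h₂.2.1 t₁ ht₁ t₂ ht₂ hne
  · simp only [Finset.mem_union, h₁.2.2 x, h₂.2.2 x, or_and_right, exists_or]

lemma image_add (v : ℤ × ℤ × ℤ) (h : IsTiling3 R T) :
    IsTiling3 (R.image (· + v)) (T.image (Finset.image (· + v))) := by
  have hinj : Function.Injective (· + v) := add_left_injective v
  refine ⟨?_, ?_, fun x => ?_⟩
  · simp only [Finset.forall_mem_image]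
    exact fun t ht => isTromino3_image_add v (h.1 t ht)
  · simp only [Finset.forall_mem_image]
    intro t₁ ht₁ t₂ ht₂ hne
    exact (Finset.disjoint_image hinj).2 (h.2.1 t₁ ht₁ t₂ ht₂ (ne_of_apply_ne _ hne))
  · simp only [Finset.mem_image, exists_exists_and_eq_and, h.2.2]
    constructor
    · rintro ⟨y, ⟨t, ht, hyt⟩, rfl⟩
      exact ⟨t, ht, y, hyt, rfl⟩
    · rintro ⟨t, ht, y, hyt, rfl⟩
      exact ⟨y, ⟨t, ht, hyt⟩, rfl⟩

lemma of_eq_biUnion (h₁ : ∀ t ∈ T, IsTromino3 t)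
    (h₂ : ∀ t₁ ∈ T, ∀ t₂ ∈ T, t₁ ≠ t₂ → Disjoint t₁ t₂)
    (h₃ : R = T.biUnion id) : IsTiling3 R T :=
  ⟨h₁, h₂, fun x => by simp [h₃]⟩

end IsTiling3

lemma Tileable3.union_s7 {R₁ R₂ : Finset (ℤ × ℤ × ℤ)} (h₁ : Tileable3 R₁) (h₂ : Tileable3 R₂)
    (hd : Disjoint R₁ R₂) : Tileable3 (R₁ ∪ R₂) :=
  let ⟨_, hT₁⟩ := h₁
  let ⟨_, hT₂⟩ := h₂
  ⟨_, hT₁.union_s7 hT₂ hd⟩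

lemma Tileable3.image_add (v : ℤ × ℤ × ℤ) {R : Finset (ℤ × ℤ × ℤ)} (h : Tileable3 R) :
    Tileable3 (R.image (· + v)) :=
  let ⟨_, hT⟩ := h
  ⟨_, hT.image_add v⟩

lemma tileable3_empty : Tileable3 ∅ :=
  ⟨∅, by simp [IsTiling3]⟩

lemma mem_box {a b c : ℕ} {p : ℤ × ℤ × ℤ} :
    p ∈ box a b c ↔ 0 ≤ p.1 ∧ p.1 < a ∧ 0 ≤ p.2.1 ∧ p.2.1 < b ∧ 0 ≤ p.2.2 ∧ p.2.2 < c := by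
  simp only [box, Finset.mem_product, Finset.mem_Ico, and_assoc]

lemma mem_image_add_box {a b c : ℕ} {v p : ℤ × ℤ × ℤ} :
    p ∈ (box a b c).image (· + v) ↔ p - v ∈ box a b c := by
  rw [Finset.mem_image]
  exact ⟨by rintro ⟨q, hq, rfl⟩; simpa using hq, fun h => ⟨p - v, h, sub_add_cancel p v⟩⟩

lemma box_add_middle (a b₁ b₂ c : ℕ) :
    box a (b₁ + b₂) c = box a b₁ c ∪ (box a b₂ c).image (· + (0, (b₁ : ℤ), 0)) := by
  ext p
  simp only [Finset.mem_union, mem_image_add_box, mem_box, Prod.fst_sub, Prod.snd_sub]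
  push_cast
  omega

lemma box_add_last (a b c₁ c₂ : ℕ) :
    box a b (c₁ + c₂) = box a b c₁ ∪ (box a b c₂).image (· + (0, 0, (c₁ : ℤ))) := by
  ext p
  simp only [Finset.mem_union, mem_image_add_box, mem_box, Prod.fst_sub, Prod.snd_sub]
  push_cast
  omega

lemma disjoint_box_image_add_middle (a b₁ b₂ c : ℕ) :
    Disjoint (box a b₁ c) ((box a b₂ c).image (· + (0, (b₁ : ℤ), 0))) := by
  rw [Finset.disjoint_left]
  intro p
  simp only [mem_image_add_box, mem_box, Prod.fst_sub, Prod.snd_sub]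
  omega

lemma disjoint_box_image_add_last (a b c₁ c₂ : ℕ) :
    Disjoint (box a b c₁) ((box a b c₂).image (· + (0, 0, (c₁ : ℤ)))) := by
  rw [Finset.disjoint_left]
  intro p
  simp only [mem_image_add_box, mem_box, Prod.fst_sub, Prod.snd_sub]
  omega

section BoxGluing

variable {a b b₁ b₂ c c₁ c₂ : ℕ}

lemma tileable3_box_add_middle (h₁ : Tileable3 (box a b₁ c)) (h₂ : Tileable3 (box a b₂ c)) :
    Tileable3 (box a (b₁ + b₂) c) := by
  rw [box_add_middle]
  exact h₁.union_s7 (h₂.image_add _) (disjoint_box_image_add_middle a b₁ b₂ c)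

lemma tileable3_box_add_last (h₁ : Tileable3 (box a b c₁)) (h₂ : Tileable3 (box a b c₂)) :
    Tileable3 (box a b (c₁ + c₂)) := by
  rw [box_add_last]
  exact h₁.union_s7 (h₂.image_add _) (disjoint_box_image_add_last a b c₁ c₂)

lemma tileable3_box_mul_middle (k : ℕ) (h : Tileable3 (box a b c)) :
    Tileable3 (box a (b * k) c) := by
  induction k with
  | zero => simpa [box] using tileable3_empty
  | succ k ih => simpa only [Nat.mul_succ] using tileable3_box_add_middle ih h

lemma tileable3_box_mul_last (k : ℕ) (h : Tileable3 (box a b c)) :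
    Tileable3 (box a b (c * k)) := by
  induction k with
  | zero => simpa [box] using tileable3_empty
  | succ k ih => simpa only [Nat.mul_succ] using tileable3_box_add_last ih h

end BoxGluing

lemma tileable3_box_3_2_1 : Tileable3 (box 3 2 1) := by
  refine ⟨{{(0,0,0), (1,0,0), (0,1,0)}, {(2,1,0), (1,1,0), (2,0,0)}},
    .of_eq_biUnion ?_ (by decide) (by decide)⟩
  simp only [Finset.mem_insert, Finset.mem_singleton, forall_eq_or_imp, forall_eq]
  exact ⟨⟨(0,0,0), 0, 1, 1, 1, by decide, by decide, by decide, by decide⟩,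
    ⟨(2,1,0), 0, 1, -1, -1, by decide, by decide, by decide, by decide⟩⟩

lemma tileable3_box_3_1_2 : Tileable3 (box 3 1 2) := by
  refine ⟨{{(0,0,0), (1,0,0), (0,0,1)}, {(2,0,1), (1,0,1), (2,0,0)}},
    .of_eq_biUnion ?_ (by decide) (by decide)⟩
  simp only [Finset.mem_insert, Finset.mem_singleton, forall_eq_or_imp, forall_eq]
  exact ⟨⟨(0,0,0), 0, 2, 1, 1, by decide, by decide, by decide, by decide⟩,
    ⟨(2,0,1), 0, 2, -1, -1, by decide, by decide, by decide, by decide⟩⟩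

lemma tileable3_box_3_3_3 : Tileable3 (box 3 3 3) := by
  refine ⟨{{(0,0,0), (1,0,0), (0,1,0)},
           {(0,0,1), (1,0,1), (0,0,2)},
           {(0,1,1), (1,1,1), (0,2,1)},
           {(0,1,2), (1,1,2), (0,2,2)},
           {(1,2,0), (0,2,0), (1,1,0)},
           {(2,0,2), (1,0,2), (2,1,2)},
           {(1,2,2), (2,2,2), (1,2,1)},
           {(2,0,0), (2,1,0), (2,0,1)},
           {(2,2,1), (2,1,1), (2,2,0)}},
    .of_eq_biUnion ?_ (by decide) (by decide)⟩
  simp only [Finset.mem_insert, Finset.mem_singleton, forall_eq_or_imp, forall_eq]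
  exact ⟨⟨(0,0,0), 0, 1, 1, 1, by decide, by decide, by decide, by decide⟩,
    ⟨(0,0,1), 0, 2, 1, 1, by decide, by decide, by decide, by decide⟩,
    ⟨(0,1,1), 0, 1, 1, 1, by decide, by decide, by decide, by decide⟩,
    ⟨(0,1,2), 0, 1, 1, 1, by decide, by decide, by decide, by decide⟩,
    ⟨(1,2,0), 0, 1, -1, -1, by decide, by decide, by decide, by decide⟩,
    ⟨(2,0,2), 0, 1, -1, 1, by decide, by decide, by decide, by decide⟩,
    ⟨(1,2,2), 0, 2, 1, -1, by decide, by decide, by decide, by decide⟩,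
    ⟨(2,0,0), 1, 2, 1, 1, by decide, by decide, by decide, by decide⟩,
    ⟨(2,2,1), 1, 2, -1, -1, by decide, by decide, by decide, by decide⟩⟩

section SlabTilings

variable {b c : ℕ}

lemma tileable3_box_of_two_dvd_middle (hb : 2 ∣ b) (c : ℕ) : Tileable3 (box 3 b c) := by
  obtain ⟨k, rfl⟩ := hb
  simpa only [one_mul] using
    tileable3_box_mul_middle k (tileable3_box_mul_last c tileable3_box_3_2_1)

lemma tileable3_box_of_two_dvd_last (b : ℕ) (hc : 2 ∣ c) : Tileable3 (box 3 b c) := by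
  obtain ⟨k, rfl⟩ := hc
  simpa only [one_mul] using
    tileable3_box_mul_last k (tileable3_box_mul_middle b tileable3_box_3_1_2)

lemma tileable3_box_of_three_dvd (hb : 3 ∣ b) (hc : 3 ∣ c) : Tileable3 (box 3 b c) := by
  obtain ⟨k, rfl⟩ := hb
  obtain ⟨l, rfl⟩ := hc
  exact tileable3_box_mul_middle k (tileable3_box_mul_last l tileable3_box_3_3_3)

end SlabTilings

/-- For every positive integer `n`, the `3×(3n+1)×(3n+1)` slab can be tiled. -/
theorem tile_slab_one (n : ℕ) (hn : 0 < n) :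
    ∃ T : Finset (Finset (ℤ × ℤ × ℤ)),
      IsTiling3 (box 3 (3 * n + 1) (3 * n + 1)) T := by
  obtain ⟨m, rfl⟩ : ∃ m, n = m + 1 := ⟨n - 1, by omega⟩
  rw [show 3 * (m + 1) + 1 = 4 + 3 * m by ring]
  exact tileable3_box_add_middle (tileable3_box_of_two_dvd_middle (by norm_num) _)
    (tileable3_box_add_last (tileable3_box_of_two_dvd_last _ (by norm_num))
      (tileable3_box_of_three_dvd (dvd_mul_right 3 m) (dvd_mul_right 3 m)))
end

section
/- If a cell (i,j) of the 5×5 grid has i+j odd (with 1-based coordinates, i.e., the cell lies in an even row or even column position under the standard coloring obstruction), then the 5×5 grid with that cell removed cannot be tiled by planar L-trominoes. -/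
/-- A planar L-tromino: a cell together with two cells adjacent to it along
the two coordinate axes (a translate/rotation of `{(0,0),(1,0),(0,1)}`). -/
def IsTromino2 (s : Finset (ℤ × ℤ)) : Prop :=
  ∃ (c : ℤ × ℤ) (ε₁ ε₂ : ℤ),
    (ε₁ = 1 ∨ ε₁ = -1) ∧ (ε₂ = 1 ∨ ε₂ = -1) ∧
    s = {c, c + (ε₁, 0), c + (0, ε₂)}

/-- The grid `[0,a) × [0,b)` in `ℤ²`. -/
noncomputable def grid (a b : ℕ) : Finset (ℤ × ℤ) :=
  (Finset.Ico (0 : ℤ) a) ×ˢ (Finset.Ico (0 : ℤ) b)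

/-- `T` is a tiling of the region `R` by planar trominoes. -/
def IsTiling2 (R : Finset (ℤ × ℤ)) (T : Finset (Finset (ℤ × ℤ))) : Prop :=
  (∀ t ∈ T, IsTromino2 t) ∧
    (∀ t₁ ∈ T, ∀ t₂ ∈ T, t₁ ≠ t₂ → Disjoint t₁ t₂) ∧
    (∀ x, x ∈ R ↔ ∃ t ∈ T, x ∈ t)

/-!
Colour the cells with both coordinates even (in 0-based coordinates). Within an L-tromino two
cells differ by a unit step in one coordinate, so a tromino covers at most one coloured cell.
The deficient `5 × 5` grid has `24` cells, so a tiling uses `8` trominoes; but if `i + j` is odd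
the removed cell is not coloured, and all `9` coloured cells must be covered.
-/

def IsEvenCell (x : ℤ × ℤ) : Prop := Even x.1 ∧ Even x.2

instance : DecidablePred IsEvenCell := fun x => inferInstanceAs (Decidable (Even x.1 ∧ Even x.2))

theorem IsTromino2.card_eq_three {t : Finset (ℤ × ℤ)} (h : IsTromino2 t) : t.card = 3 := by
  obtain ⟨c, ε₁, ε₂, h₁, h₂, rfl⟩ := h
  rw [Finset.card_insert_of_notMem, Finset.card_pair] <;>
    simp only [ne_eq, Finset.mem_insert, Finset.mem_singleton, Prod.ext_iff, Prod.fst_add,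
      Prod.snd_add, not_or] <;> omega

theorem IsTromino2.subsingleton_evenCells {t : Finset (ℤ × ℤ)} (h : IsTromino2 t) :
    {x | x ∈ t ∧ IsEvenCell x}.Subsingleton := by
  obtain ⟨c, ε₁, ε₂, h₁, h₂, rfl⟩ := h
  rintro a ⟨ha, ⟨u, hu⟩, ⟨v, hv⟩⟩ b ⟨hb, ⟨w, hw⟩, ⟨z, hz⟩⟩
  simp only [Finset.mem_insert, Finset.mem_singleton, Prod.ext_iff, Prod.fst_add,
    Prod.snd_add] at ha hb
  ext <;> omega

namespace IsTiling2

variable {R : Finset (ℤ × ℤ)} {T : Finset (Finset (ℤ × ℤ))}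

theorem card_eq_three_mul (h : IsTiling2 R T) : R.card = 3 * T.card := by
  obtain ⟨htrom, hdisj, hcover⟩ := h
  have hR : R = T.biUnion id := by
    ext x
    simpa using hcover x
  rw [hR, Finset.card_biUnion (t := id) hdisj, mul_comm]
  exact Finset.sum_const_nat fun t ht => (htrom t ht).card_eq_three

theorem card_evenCells_le (h : IsTiling2 R T) : (R.filter IsEvenCell).card ≤ T.card := by
  refine Finset.card_le_card_of_forall_subsingleton (· ∈ ·) (fun x hx => ?_) fun t ht => ?_
  · exact (h.2.2 x).1 (Finset.mem_filter.1 hx).1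
  · refine (h.1 t ht).subsingleton_evenCells.anti ?_
    rintro x ⟨hx, hxt⟩
    exact ⟨hxt, (Finset.mem_filter.1 hx).2⟩

end IsTiling2

theorem card_grid (a b : ℕ) : (grid a b).card = a * b := by
  simp [grid]

theorem card_grid_five_evenCells : ((grid 5 5).filter IsEvenCell).card = 9 := by
  decide

/-- If the removed cell `(i,j)` of the `5×5` grid (1-based coordinates) has
`i + j` odd, then the deficient grid cannot be tiled by planar L-trominoes. -/
theorem no_tiling_deficient_5 (i j : ℤ) (hi : 1 ≤ i ∧ i ≤ 5) (hj : 1 ≤ j ∧ j ≤ 5)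
    (hodd : Odd (i + j)) :
    ¬ ∃ T : Finset (Finset (ℤ × ℤ)),
        IsTiling2 ((grid 5 5).erase (i - 1, j - 1)) T := by
  rintro ⟨T, hT⟩
  have hmem : (i - 1, j - 1) ∈ grid 5 5 := by
    simp only [grid, Finset.mem_product, Finset.mem_Ico]
    omega
  have hnotEven : ¬ IsEvenCell (i - 1, j - 1) := by
    rintro ⟨⟨u, hu⟩, ⟨v, hv⟩⟩
    obtain ⟨k, hk⟩ := hodd
    dsimp only at hu hv
    omega
  have hcard : 3 * T.card = 24 := by
    rw [← hT.card_eq_three_mul, Finset.card_erase_of_mem hmem, card_grid]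
  have hcoloured : ((grid 5 5).erase (i - 1, j - 1)).filter IsEvenCell =
      (grid 5 5).filter IsEvenCell := by
    rw [Finset.filter_erase,
      Finset.erase_eq_of_notMem fun h => hnotEven (Finset.mem_filter.1 h).2]
  have hcovered := hT.card_evenCells_le
  rw [hcoloured, card_grid_five_evenCells] at hcovered
  omega
end
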